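/- arXiv:0902.3254 — 6 statements merged into one kernel-verified Lean document; each statement's English description precedes it below -/
import Mathlib

section
/- Let a ≥ 2 and r ≥ 1 be integers, let j_0 > j_1 > ⋯ > j_r ≥ 0 be a strictly decreasing sequence of nonnegative integers, and let δ_{j_i} ∈ {1, 2, …, a−1} for i = 0, 1, …, r. Set n_J = δ_{j_0}·a^{j_0} − Σ_{i=1}^{r} δ_{j_i}·a^{j_i}. Then M_A(n_J) ≤ r, and n_J has an a-adic representation of the form n_J = (δ_{j_0} − 1)·a^{j_0} + Σ_{i=j_r+1}^{j_0−1} δ'_i·a^i + δ'_{j_r}·a^{j_r}, where δ'_i ∈ {0, 1, …, a−1} for j_r ≤ i ≤ j_0 − 1 and δ'_{j_r} ≠ 0; in particular every base-a digit of n_J at positions below j_r and above j_0 is zero, and the digit at position j_r is nonzero. -/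
/-!
Write `T = ∑_{i=1}^r δ_i a^{j_i}`. Because the exponents strictly decrease and the digits are
below `a`, every tail `∑_{i>k} δ_i a^{j_i}` plus `a^{j_r}` is at most `a^{j_{k+1}+1}`; in
particular `0 < T < a^{j_0}`, so `n_J = (δ_0 - 1) a^{j_0} + (a^{j_0} - T)` and all digits of
`n_J` outside `[j_r, j_0]` vanish. Adding the tail beyond `k` to `n_J` gives a multiple of
`a^{j_k}`, so for `j_{k+1} < p < j_k` (and for `p = j_r`) we have `n_J ≡ -t (mod a^{p+1})`
with `0 < t ≤ (a - 1) a^p`, which makes the digit at `p` nonzero. Hence the only zero digits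
strictly between `j_r` and `j_0` sit at `j_1, …, j_{r-1}`, and since every maximal block ends
just below a zero digit or at `j_0`, there are at most `r` blocks.
-/

/-- The `i`-th digit of `n` in base `a`. -/
def digit (a n i : ℕ) : ℕ := n / a ^ i % a

/-- `blockCount a n` is the number of maximal `a`-adic blocks of nonzero digits in the
base-`a` representation of `n`, counted via the top ends of the blocks. -/
noncomputable def blockCount (a n : ℕ) : ℕ :=
  {i : ℕ | digit a n i ≠ 0 ∧ digit a n (i + 1) = 0}.ncard

open Finset

section Digits

variable {a : ℕ}

lemma digit_eq_mod_pow_succ_div (n p : ℕ) : digit a n p = n % a ^ (p + 1) / a ^ p := by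
  rw [digit, pow_succ, Nat.mod_mul_right_div_self]

lemma digit_eq_zero_of_pow_dvd {n p : ℕ} (h : a ^ (p + 1) ∣ n) : digit a n p = 0 := by
  rw [digit_eq_mod_pow_succ_div, Nat.mod_eq_zero_of_dvd h, Nat.zero_div]

lemma digit_eq_zero_of_lt_pow {n p : ℕ} (h : n < a ^ p) : digit a n p = 0 := by
  rw [digit, Nat.div_eq_of_lt h, Nat.zero_mod]

lemma digit_ne_zero_of_pow_dvd_add {n p t : ℕ} (h : a ^ (p + 1) ∣ n + t) (ht : 0 < t)
    (hta : t + a ^ p ≤ a ^ (p + 1)) : digit a n p ≠ 0 := by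
  obtain ⟨_ | c, hc⟩ := h
  · omega
  have hmod : n % a ^ (p + 1) = a ^ (p + 1) - t := by
    have hn : n = (a ^ (p + 1) - t) + a ^ (p + 1) * c := by
      rw [mul_add_one] at hc; omega
    rw [hn, Nat.add_mul_mod_self_left, Nat.mod_eq_of_lt (by omega)]
  have hap : 0 < a ^ p := Nat.pos_of_ne_zero fun h0 => by
    rw [pow_succ, h0, zero_mul] at hta; omega
  rw [digit_eq_mod_pow_succ_div, hmod]
  exact (Nat.div_pos (by omega) hap).ne'

lemma mod_pow_eq_sum_digit (n k : ℕ) :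
    n % a ^ k = ∑ i ∈ range k, digit a n i * a ^ i := by
  induction k with
  | zero => simp [Nat.mod_one]
  | succ k ih => rw [Nat.mod_pow_succ, sum_range_succ, ← ih, digit, mul_comm (a ^ k)]

lemma blockCount_le_card_filter_add_one {n L H : ℕ}
    (hLH : ∀ p, digit a n p ≠ 0 → L ≤ p ∧ p ≤ H) :
    blockCount a n ≤ #{q ∈ Ioo L H | digit a n q = 0} + 1 := by
  set tops := {i : ℕ | digit a n i ≠ 0 ∧ digit a n (i + 1) = 0}
  -- A top end `p` is sent to the zero digit `p + 1` just above it; only `p = H` and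
  -- `p = H - 1` are sent to `H`, and they cannot both be top ends.
  have hmaps : ∀ p ∈ tops, min (p + 1) H ∈ insert H {q ∈ Ioo L H | digit a n q = 0} := by
    rintro p ⟨hp, hp1⟩
    have := hLH p hp
    rcases lt_or_ge (p + 1) H with hlt | hge
    · simp [min_eq_left hlt.le, hlt, hp1, show L < p + 1 by omega]
    · simp [min_eq_right hge]
  have hinj : Set.InjOn (fun p => min (p + 1) H) tops := by
    intro p hp p' hp' heq
    wlog hlt : p < p' generalizing p p'
    · rcases (not_lt.mp hlt).lt_or_eq with h | h
      · exact (this hp' hp heq.symm h).symm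
      · exact h.symm
    have := (hLH p' hp'.1).2
    have hsucc : p + 1 = p' := by simp only at heq; omega
    exact absurd (hsucc ▸ hp.2) hp'.1
  calc blockCount a n ≤ (↑(insert H {q ∈ Ioo L H | digit a n q = 0}) : Set ℕ).ncard :=
        Set.ncard_le_ncard_of_injOn _ hmaps hinj (Finset.finite_toSet _)
    _ ≤ #{q ∈ Ioo L H | digit a n q = 0} + 1 := by
        rw [Set.ncard_coe_finset]; exact card_insert_le _ _

end Digits

section DecreasingExponents

variable {a r : ℕ} {j δ : ℕ → ℕ}

lemma exists_succ_le_lt_of_le_of_lt (hj : ∀ i < r, j (i + 1) < j i) {p : ℕ}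
    (hrp : j r ≤ p) (hp0 : p < j 0) : ∃ k < r, j (k + 1) ≤ p ∧ p < j k := by
  induction r with
  | zero => omega
  | succ r ih =>
    by_cases h : j r ≤ p
    · obtain ⟨k, hk, hk'⟩ := ih (fun i hi => hj i (by omega)) h
      exact ⟨k, by omega, hk'⟩
    · exact ⟨r, by omega, hrp, by omega⟩

lemma sum_Ioc_add_pow_le (hj : ∀ i < r, j (i + 1) < j i) (hδ : ∀ i ≤ r, δ i < a)
    {k : ℕ} (hkr : k < r) :
    ∑ i ∈ Ioc k r, δ i * a ^ j i + a ^ j r ≤ a ^ (j (k + 1) + 1) := by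
  induction r, hkr using Nat.le_induction with
  | base =>
    rw [Nat.Ioc_succ_singleton, sum_singleton, ← add_one_mul, pow_succ']
    exact Nat.mul_le_mul_right _ (hδ _ le_rfl)
  | succ r hkr ih =>
    have hstep : a ^ (j (r + 1) + 1) ≤ a ^ j r :=
      Nat.pow_le_pow_right (by have := hδ 0 (Nat.zero_le _); omega) (hj r (by omega))
    have hlast : (δ (r + 1) + 1) * a ^ j (r + 1) ≤ a ^ (j (r + 1) + 1) := by
      rw [pow_succ']; exact Nat.mul_le_mul_right _ (hδ _ le_rfl)
    have := ih (fun i hi => hj i (by omega)) (fun i hi => hδ i (by omega))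
    rw [sum_Ioc_succ_top (by omega)]
    rw [add_one_mul] at hlast
    omega

lemma pow_dvd_sum_mul_pow {s : Finset ℕ} {e : ℕ} (he : ∀ i ∈ s, e ≤ j i) :
    a ^ e ∣ ∑ i ∈ s, δ i * a ^ j i :=
  dvd_sum fun i hi => dvd_mul_of_dvd_right (pow_dvd_pow a (he i hi)) _

end DecreasingExponents

def nJ (a r : ℕ) (j δ : ℕ → ℕ) : ℕ := δ 0 * a ^ j 0 - ∑ i ∈ Ioc 0 r, δ i * a ^ j i

section nJ

variable {a r : ℕ} {j δ : ℕ → ℕ}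

lemma sum_Ioc_zero_add_pow_le (hr : 1 ≤ r) (hj : ∀ i < r, j (i + 1) < j i)
    (hδ : ∀ i ≤ r, δ i < a) : ∑ i ∈ Ioc 0 r, δ i * a ^ j i + a ^ j r ≤ a ^ j 0 :=
  (sum_Ioc_add_pow_le hj hδ hr).trans
    (Nat.pow_le_pow_right ((Nat.zero_le _).trans_lt (hδ 0 (Nat.zero_le r))) (hj 0 hr))

lemma nJ_add_sum_Ioc_zero (hr : 1 ≤ r) (hj : ∀ i < r, j (i + 1) < j i)
    (hδ : ∀ i ≤ r, 0 < δ i ∧ δ i < a) :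
    nJ a r j δ + ∑ i ∈ Ioc 0 r, δ i * a ^ j i = δ 0 * a ^ j 0 := by
  have := sum_Ioc_zero_add_pow_le hr hj fun i hi => (hδ i hi).2
  have : a ^ j 0 ≤ δ 0 * a ^ j 0 := Nat.le_mul_of_pos_left _ (hδ 0 (Nat.zero_le r)).1
  rw [nJ]; omega

lemma sum_Ioc_pos {k : ℕ} (hkr : k < r) (hδ : ∀ i ≤ r, 0 < δ i ∧ δ i < a) :
    0 < ∑ i ∈ Ioc k r, δ i * a ^ j i :=
  sum_pos' (fun _ _ => Nat.zero_le _) ⟨r, by simpa using hkr,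
    Nat.mul_pos (hδ r le_rfl).1 (Nat.pow_pos ((hδ r le_rfl).1.trans (hδ r le_rfl).2))⟩

lemma pow_dvd_nJ_add_sum_Ioc (hr : 1 ≤ r) (hj : ∀ i < r, j (i + 1) < j i)
    (hδ : ∀ i ≤ r, 0 < δ i ∧ δ i < a) {k : ℕ} (hkr : k ≤ r) :
    a ^ j k ∣ nJ a r j δ + ∑ i ∈ Ioc k r, δ i * a ^ j i := by
  have hsplit := nJ_add_sum_Ioc_zero hr hj hδ
  rw [← sum_Ioc_consecutive _ (Nat.zero_le k) hkr, ← add_assoc, add_right_comm] at hsplit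
  have hanti := (strictAntiOn_Iic_of_succ_lt hj).antitoneOn
  have hhead : a ^ j k ∣ ∑ i ∈ Ioc 0 k, δ i * a ^ j i := pow_dvd_sum_mul_pow fun i hi =>
    hanti ((mem_Ioc.1 hi).2.trans hkr) hkr (mem_Ioc.1 hi).2
  refine (Nat.dvd_add_left hhead).1 (hsplit ▸ ?_)
  exact dvd_mul_of_dvd_right (pow_dvd_pow a (hanti (Nat.zero_le r) hkr (Nat.zero_le k))) _

lemma digit_nJ_ne_zero (ha : 2 ≤ a) (hr : 1 ≤ r) (hj : ∀ i < r, j (i + 1) < j i)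
    (hδ : ∀ i ≤ r, 0 < δ i ∧ δ i < a) {p : ℕ} (hrp : j r ≤ p) (hp0 : p < j 0)
    (hp : p ∉ (Ioo 0 r).image j) : digit a (nJ a r j δ) p ≠ 0 := by
  obtain ⟨k, hkr, hkp, hpk⟩ := exists_succ_le_lt_of_le_of_lt hj hrp hp0
  have htail := sum_Ioc_add_pow_le hj (fun i hi => (hδ i hi).2) hkr
  refine digit_ne_zero_of_pow_dvd_add ((pow_dvd_pow a hpk).trans
    (pow_dvd_nJ_add_sum_Ioc hr hj hδ hkr.le)) (sum_Ioc_pos hkr hδ) ?_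
  rcases hkp.lt_or_eq with hlt | heq
  · have h1 : a ^ (j (k + 1) + 1) ≤ a ^ p := Nat.pow_le_pow_right (by omega) hlt
    have h2 : a ^ p + a ^ p ≤ a ^ (p + 1) := by rw [pow_succ, ← mul_two]; gcongr
    omega
  · obtain rfl : k + 1 = r := by
      by_contra hne
      exact hp (mem_image.2 ⟨k + 1, mem_Ioo.2 ⟨k.succ_pos, by omega⟩, heq⟩)
    rwa [heq] at htail

lemma digit_nJ_eq_zero_of_lt (hr : 1 ≤ r) (hj : ∀ i < r, j (i + 1) < j i)
    (hδ : ∀ i ≤ r, 0 < δ i ∧ δ i < a) {p : ℕ} (hp : p < j r) :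
    digit a (nJ a r j δ) p = 0 := by
  have := pow_dvd_nJ_add_sum_Ioc hr hj hδ le_rfl
  rw [Ioc_self, sum_empty, add_zero] at this
  exact digit_eq_zero_of_pow_dvd ((pow_dvd_pow a hp).trans this)

lemma nJ_lt_pow (hr : 1 ≤ r) (hj : ∀ i < r, j (i + 1) < j i)
    (hδ : ∀ i ≤ r, 0 < δ i ∧ δ i < a) : nJ a r j δ < a ^ (j 0 + 1) := by
  have := nJ_add_sum_Ioc_zero hr hj hδ
  have : δ 0 * a ^ j 0 < a ^ (j 0 + 1) := by
    rw [pow_succ']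
    have h0 := hδ 0 (Nat.zero_le r)
    exact Nat.mul_lt_mul_of_pos_right h0.2 (Nat.pow_pos (h0.1.trans h0.2))
  omega

lemma blockCount_nJ_le (ha : 2 ≤ a) (hr : 1 ≤ r) (hj : ∀ i < r, j (i + 1) < j i)
    (hδ : ∀ i ≤ r, 0 < δ i ∧ δ i < a) : blockCount a (nJ a r j δ) ≤ r := by
  refine (blockCount_le_card_filter_add_one (L := j r) (H := j 0)
    fun p hp => ⟨?_, ?_⟩).trans ?_
  · by_contra h
    exact hp (digit_nJ_eq_zero_of_lt hr hj hδ (not_le.1 h))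
  · by_contra h
    exact hp (digit_eq_zero_of_lt_pow ((nJ_lt_pow hr hj hδ).trans_le
      (Nat.pow_le_pow_right (by omega) (not_le.1 h))))
  · have hzeros : {q ∈ Ioo (j r) (j 0) | digit a (nJ a r j δ) q = 0} ⊆ (Ioo 0 r).image j := by
      intro q hq
      obtain ⟨hq, hq0⟩ := mem_filter.1 hq
      by_contra h
      exact digit_nJ_ne_zero ha hr hj hδ (mem_Ioo.1 hq).1.le (mem_Ioo.1 hq).2 h hq0
    calc _ ≤ #((Ioo 0 r).image j) + 1 := Nat.add_le_add_right (card_le_card hzeros) 1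
      _ ≤ #(Ioo 0 r) + 1 := Nat.add_le_add_right card_image_le 1
      _ = r := by rw [Nat.card_Ioo]; omega

lemma nJ_eq_sum_digit (hr : 1 ≤ r) (hj : ∀ i < r, j (i + 1) < j i)
    (hδ : ∀ i ≤ r, 0 < δ i ∧ δ i < a) :
    nJ a r j δ =
      (δ 0 - 1) * a ^ j 0 + ∑ i ∈ Ico (j r) (j 0), digit a (nJ a r j δ) i * a ^ i := by
  have hsum := nJ_add_sum_Ioc_zero hr hj hδ
  have hbound := sum_Ioc_zero_add_pow_le hr hj fun i hi => (hδ i hi).2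
  have hpos := sum_Ioc_pos (j := j) hr hδ
  have hdiv : nJ a r j δ / a ^ j 0 = δ 0 - 1 := by
    refine Nat.div_eq_of_lt_le ?_ ?_
    · rw [Nat.sub_one_mul]; omega
    · rw [Nat.sub_add_cancel (hδ 0 (Nat.zero_le r)).1]; omega
  have hlow : ∑ i ∈ range (j r), digit a (nJ a r j δ) i * a ^ i = 0 :=
    sum_eq_zero fun i hi => by rw [digit_nJ_eq_zero_of_lt hr hj hδ (mem_range.1 hi), zero_mul]
  have hjr : j r ≤ j 0 :=
    (strictAntiOn_Iic_of_succ_lt hj).antitoneOn (Nat.zero_le r) Set.self_mem_Iic (Nat.zero_le r)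
  conv_lhs => rw [← Nat.div_add_mod (nJ a r j δ) (a ^ j 0)]
  rw [hdiv, mod_pow_eq_sum_digit, ← sum_range_add_sum_Ico _ hjr, hlow, zero_add, mul_comm]

end nJ

theorem stmt_5 (a r : ℕ) (ha : 2 ≤ a) (hr : 1 ≤ r)
    (j : ℕ → ℕ) (hj : ∀ i, i < r → j (i + 1) < j i)
    (δ : ℕ → ℕ) (hδ : ∀ i, i ≤ r → 1 ≤ δ i ∧ δ i ≤ a - 1) :
    ∃ N : ℕ,
      (N : ℤ) = (δ 0 : ℤ) * (a : ℤ) ^ j 0 -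
          ∑ i ∈ Finset.Icc 1 r, (δ i : ℤ) * (a : ℤ) ^ j i ∧
      blockCount a N ≤ r ∧
      ∃ δ' : ℕ → ℕ,
        (∀ i ∈ Finset.Ico (j r) (j 0), δ' i ≤ a - 1) ∧
        δ' (j r) ≠ 0 ∧
        N = (δ 0 - 1) * a ^ j 0 + ∑ i ∈ Finset.Ico (j r) (j 0), δ' i * a ^ i := by
  have hδ' : ∀ i ≤ r, 0 < δ i ∧ δ i < a := fun i hi => by have := hδ i hi; omega
  have hjr : j r < j 0 := strictAntiOn_Iic_of_succ_lt hj (Nat.zero_le r) Set.self_mem_Iic hr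
  have hjr_mem : j r ∉ (Ioo 0 r).image j := fun h => by
    obtain ⟨i, hi, hji⟩ := mem_image.1 h
    obtain ⟨-, hir⟩ := mem_Ioo.1 hi
    exact (strictAntiOn_Iic_of_succ_lt hj hir.le Set.self_mem_Iic hir).ne' hji
  refine ⟨nJ a r j δ, ?_, blockCount_nJ_le ha hr hj hδ', digit a (nJ a r j δ),
    fun i _ => Nat.le_sub_one_of_lt (Nat.mod_lt _ (by omega)),
    digit_nJ_ne_zero ha hr hj hδ' le_rfl hjr hjr_mem, nJ_eq_sum_digit hr hj hδ'⟩
  have hsum := nJ_add_sum_Ioc_zero hr hj hδ'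
  rw [← Icc_add_one_left_eq_Ioc, zero_add] at hsum
  rw [eq_sub_iff_add_eq]
  exact_mod_cast hsum
end

section
/- Let a ≥ 2 be an integer, and let I and W be disjoint finite sets of nonnegative integers. Let δ_i ∈ {1, 2, …, a−1} for i ∈ I and δ_w ∈ {1, 2, …, a−1} for w ∈ W. Then M_A(Σ_{i∈I} δ_i·a^i) − |W| ≤ M_A(Σ_{i∈I} δ_i·a^i + Σ_{w∈W} δ_w·a^w) ≤ M_A(Σ_{i∈I} δ_i·a^i) + |W|. -/
/-!
Adding a digit `d < a` at a position `w` where `n` has digit `0` produces no carry, so it changes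
only the `w`-th digit. A maximal block is counted by its top end `i` (a nonzero digit followed by
a zero digit); such an end survives unless it involves position `w`, so every block end of
`n + d * a ^ w` other than `w` is one of `n`, and every block end of `n` other than `w - 1` is one of
`n + d * a ^ w`. Hence each added digit changes the number of blocks by at most one.
-/

section Digits

variable {a n d w : ℕ}

lemma digit_add_mul_pow_of_lt (ha : 0 < a) {i : ℕ} (hi : i < w) :
    digit a (n + d * a ^ w) i = digit a n i := by
  obtain ⟨k, rfl⟩ : ∃ k, w = i + k + 1 := ⟨w - i - 1, by omega⟩
  have hsplit : d * a ^ (i + k + 1) = a * (d * a ^ k) * a ^ i := by ring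
  unfold digit
  rw [hsplit, Nat.add_mul_div_right _ _ (pow_pos ha i), Nat.add_mul_mod_self_left]

lemma digit_add_mul_pow_self (ha : 0 < a) :
    digit a (n + d * a ^ w) w = (digit a n w + d) % a := by
  unfold digit
  rw [Nat.add_mul_div_right _ _ (pow_pos ha w), Nat.mod_add_mod]

lemma digit_add_mul_pow_of_gt (h : digit a n w + d < a) {i : ℕ} (hi : w < i) :
    digit a (n + d * a ^ w) i = digit a n i := by
  have ha : 0 < a := by omega
  have hlow : n % a ^ (w + 1) + d * a ^ w < a ^ (w + 1) := by
    have hmod := Nat.mod_lt n (pow_pos ha w)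
    have hdig : a ^ w * (digit a n w + d + 1) ≤ a ^ w * a := Nat.mul_le_mul_left _ h
    rw [Nat.mod_pow_succ, pow_succ]
    unfold digit at hdig
    nlinarith
  have hhigh : (n + d * a ^ w) / a ^ (w + 1) = n / a ^ (w + 1) := by
    conv_lhs => rw [← Nat.div_add_mod n (a ^ (w + 1))]
    rw [add_assoc, Nat.mul_add_div (pow_pos ha _), Nat.div_eq_of_lt hlow, add_zero]
  obtain ⟨k, rfl⟩ : ∃ k, i = w + 1 + k := ⟨i - w - 1, by omega⟩
  unfold digit
  rw [pow_add, ← Nat.div_div_eq_div_mul, ← Nat.div_div_eq_div_mul, hhigh]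

lemma digit_add_mul_pow (h : digit a n w + d < a) (i : ℕ) :
    digit a (n + d * a ^ w) i = if i = w then digit a n w + d else digit a n i := by
  have ha : 0 < a := by omega
  rcases lt_trichotomy i w with hi | rfl | hi
  · rw [if_neg hi.ne, digit_add_mul_pow_of_lt ha hi]
  · rw [if_pos rfl, digit_add_mul_pow_self ha, Nat.mod_eq_of_lt h]
  · rw [if_neg hi.ne', digit_add_mul_pow_of_gt h hi]

lemma digit_sum_mul_pow {δ : ℕ → ℕ} {S : Finset ℕ} (hδ : ∀ i ∈ S, δ i < a) (j : ℕ) :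
    digit a (∑ i ∈ S, δ i * a ^ i) j = if j ∈ S then δ j else 0 := by
  induction S using Finset.induction_on generalizing j with
  | empty => simp [digit]
  | @insert k S hk ih =>
    have ih := ih fun i hi => hδ i (Finset.mem_insert_of_mem hi)
    have hk0 : digit a (∑ i ∈ S, δ i * a ^ i) k + δ k < a := by
      simpa [ih, hk] using hδ k (Finset.mem_insert_self k S)
    rw [Finset.sum_insert hk, add_comm, digit_add_mul_pow hk0, ih, ih]
    by_cases hjk : j = k <;> simp [hjk, hk]

end Digits

def blockEnds (a n : ℕ) : Set ℕ :=
  {i | digit a n i ≠ 0 ∧ digit a n (i + 1) = 0}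

section BlockEnds

variable {a n d w : ℕ}

lemma blockCount_eq_ncard_blockEnds : blockCount a n = (blockEnds a n).ncard := rfl

lemma blockEnds_finite (ha : 1 < a) : (blockEnds a n).Finite := by
  refine (Set.finite_Iio n).subset fun i ⟨hi, _⟩ => ?_
  by_contra hni
  apply hi
  unfold digit
  rw [Nat.div_eq_of_lt ((not_lt.mp hni).trans_lt (Nat.lt_pow_self ha)), Nat.zero_mod]

lemma blockEnds_add_mul_pow_subset (h : digit a n w = 0) (hd : d < a) :
    blockEnds a (n + d * a ^ w) ⊆ insert w (blockEnds a n) := by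
  have hdig := digit_add_mul_pow (by rwa [h, zero_add] : digit a n w + d < a)
  rintro i ⟨hi, hi1⟩
  by_cases hiw : i = w
  · exact .inl hiw
  refine .inr ⟨by rwa [hdig, if_neg hiw] at hi, ?_⟩
  by_cases hiw1 : i + 1 = w
  · rwa [hiw1]
  · rwa [hdig, if_neg hiw1] at hi1

lemma blockEnds_subset_add_mul_pow (h : digit a n w = 0) (hd : d < a) :
    blockEnds a n ⊆ insert (w - 1) (blockEnds a (n + d * a ^ w)) := by
  have hdig := digit_add_mul_pow (by rwa [h, zero_add] : digit a n w + d < a)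
  rintro i ⟨hi, hi1⟩
  have hiw : i ≠ w := by rintro rfl; exact hi h
  by_cases hiw1 : i + 1 = w
  · exact .inl (by omega)
  · exact .inr ⟨by rwa [hdig, if_neg hiw], by rwa [hdig, if_neg hiw1]⟩

end BlockEnds

lemma Set.ncard_le_ncard_add_one_of_subset_insert {α : Type*} {s t : Set α} {x : α}
    (hst : s ⊆ insert x t) (ht : t.Finite) : s.ncard ≤ t.ncard + 1 :=
  (Set.ncard_le_ncard hst (ht.insert x)).trans (Set.ncard_insert_le x t)

lemma abs_blockCount_add_mul_pow_sub_le {a n d w : ℕ} (ha : 1 < a) (hd : d < a)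
    (h : digit a n w = 0) :
    |(blockCount a (n + d * a ^ w) : ℤ) - blockCount a n| ≤ 1 := by
  have hle := Set.ncard_le_ncard_add_one_of_subset_insert
    (blockEnds_add_mul_pow_subset h hd) (blockEnds_finite ha)
  have hge := Set.ncard_le_ncard_add_one_of_subset_insert
    (blockEnds_subset_add_mul_pow h hd) (blockEnds_finite ha)
  rw [blockCount_eq_ncard_blockEnds, blockCount_eq_ncard_blockEnds, abs_sub_le_iff]
  omega

lemma abs_blockCount_add_sum_sub_le {a : ℕ} (ha : 1 < a) {δ : ℕ → ℕ} {W : Finset ℕ}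
    (hδ : ∀ w ∈ W, δ w < a) {n : ℕ} (hn : ∀ w ∈ W, digit a n w = 0) :
    |(blockCount a (n + ∑ w ∈ W, δ w * a ^ w) : ℤ) - blockCount a n| ≤ W.card := by
  induction W using Finset.induction_on generalizing n with
  | empty => simp
  | @insert w W hw ih =>
    have hδW : ∀ v ∈ W, δ v < a := fun v hv => hδ v (Finset.mem_insert_of_mem hv)
    have hw0 : digit a n w = 0 := hn w (Finset.mem_insert_self w W)
    have hstep := abs_blockCount_add_mul_pow_sub_le ha (hδ w (Finset.mem_insert_self w W)) hw0
    have hrest := ih hδW (n := n + δ w * a ^ w) fun v hv => by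
      rw [digit_add_mul_pow (by rw [hw0, zero_add]; exact hδ w (Finset.mem_insert_self w W)),
        if_neg (ne_of_mem_of_not_mem hv hw), hn v (Finset.mem_insert_of_mem hv)]
    rw [Finset.sum_insert hw, ← add_assoc, Finset.card_insert_of_notMem hw, Nat.cast_succ]
    calc _ ≤ |(blockCount a (n + δ w * a ^ w + ∑ v ∈ W, δ v * a ^ v) : ℤ)
              - blockCount a (n + δ w * a ^ w)|
            + |(blockCount a (n + δ w * a ^ w) : ℤ) - blockCount a n| := abs_sub_le _ _ _
      _ ≤ W.card + 1 := add_le_add hrest hstep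

theorem stmt_6 (a : ℕ) (ha : 2 ≤ a) (I W : Finset ℕ) (hIW : Disjoint I W)
    (δ : ℕ → ℕ) (hδ : ∀ i ∈ I ∪ W, 1 ≤ δ i ∧ δ i ≤ a - 1) :
    blockCount a (∑ i ∈ I, δ i * a ^ i) - W.card ≤
        blockCount a (∑ i ∈ I, δ i * a ^ i + ∑ w ∈ W, δ w * a ^ w) ∧
    blockCount a (∑ i ∈ I, δ i * a ^ i + ∑ w ∈ W, δ w * a ^ w) ≤
        blockCount a (∑ i ∈ I, δ i * a ^ i) + W.card := by
  have hlt : ∀ i ∈ I ∪ W, δ i < a := fun i hi => by have := hδ i hi; omega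
  have hzero : ∀ w ∈ W, digit a (∑ i ∈ I, δ i * a ^ i) w = 0 := fun w hw => by
    rw [digit_sum_mul_pow (fun i hi => hlt i (Finset.mem_union_left W hi)),
      if_neg (Finset.disjoint_right.mp hIW hw)]
  have hdist := abs_blockCount_add_sum_sub_le ha
    (fun w hw => hlt w (Finset.mem_union_right I hw)) hzero
  rw [abs_le] at hdist
  omega
end

section
/- Let a ≥ 2 and k ≥ 1 be integers. If n is a positive integer such that n = Σ_{t∈T} ε_t·δ_t·a^t, where T is a set of k nonnegative integers, δ_t ∈ {1, 2, …, a−1} for all t ∈ T, and ε_t ∈ {1, −1} for all t ∈ T, then M_A(n) ≤ k. -/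
lemma mod_pow_add_two_div_pow (a n i : ℕ) :
    n % a ^ (i + 2) / a ^ i = digit a n i + a * digit a n (i + 1) := by
  rw [pow_add, Nat.mod_mul_right_div_self, sq, Nat.mod_mul, digit, digit,
    Nat.div_div_eq_div_mul, ← pow_succ]

lemma mod_pow_add_two_mem_Ico {a n i : ℕ} (ha : 0 < a)
    (hi : digit a n i ≠ 0) (hi1 : digit a n (i + 1) = 0) :
    a ^ i ≤ n % a ^ (i + 2) ∧ n % a ^ (i + 2) < a ^ (i + 1) := by
  have hdiv := mod_pow_add_two_div_pow a n i
  rw [hi1, mul_zero, add_zero] at hdiv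
  have hlt : digit a n i < a := Nat.mod_lt _ ha
  constructor
  · rw [← one_mul (a ^ i)]
    exact (Nat.le_div_iff_mul_le (pow_pos ha i)).mp (hdiv ▸ Nat.one_le_iff_ne_zero.mpr hi)
  · rw [show a ^ (i + 1) = a * a ^ i from pow_succ' a i]
    exact (Nat.div_lt_iff_lt_mul (pow_pos ha i)).mp (hdiv ▸ hlt)

lemma abs_sum_mul_pow_le {a : ℤ} (ha : 1 ≤ a) {s : Finset ℕ} {i : ℕ} (hs : s ⊆ Finset.range i)
    {c : ℕ → ℤ} (hc : ∀ t ∈ s, |c t| ≤ a - 1) :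
    |∑ t ∈ s, c t * a ^ t| ≤ a ^ i - 1 := by
  have hterm : ∀ t ∈ Finset.range i, 0 ≤ (a - 1) * a ^ t := fun t _ =>
    mul_nonneg (by linarith) (pow_nonneg (by linarith) t)
  calc |∑ t ∈ s, c t * a ^ t| ≤ ∑ t ∈ s, |c t * a ^ t| := Finset.abs_sum_le_sum_abs _ s
    _ ≤ ∑ t ∈ s, (a - 1) * a ^ t := Finset.sum_le_sum fun t ht => by
        rw [abs_mul, abs_of_nonneg (pow_nonneg (by linarith : (0 : ℤ) ≤ a) t)]
        gcongr
        exact hc t ht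
    _ ≤ ∑ t ∈ Finset.range i, (a - 1) * a ^ t :=
        Finset.sum_le_sum_of_subset_of_nonneg hs fun t ht _ => hterm t ht
    _ = a ^ i - 1 := by rw [← Finset.mul_sum, mul_comm, geom_sum_mul]

lemma mem_or_succ_mem_of_digit_ne_zero_of_digit_succ_eq_zero {a n i : ℕ} (ha : 2 ≤ a)
    {T : Finset ℕ} {c : ℕ → ℤ} (hc : ∀ t ∈ T, |c t| ≤ a - 1)
    (hsum : (n : ℤ) = ∑ t ∈ T, c t * (a : ℤ) ^ t)
    (hi : digit a n i ≠ 0) (hi1 : digit a n (i + 1) = 0) :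
    i ∈ T ∨ i + 1 ∈ T := by
  by_contra! hT
  set m : ℤ := (a : ℤ) ^ (i + 2)
  set r : ℕ := n % a ^ (i + 2)
  set S : ℤ := ∑ t ∈ T.filter (· < i), c t * (a : ℤ) ^ t
  obtain ⟨hr_ge, hr_lt⟩ := mod_pow_add_two_mem_Ico (by omega) hi hi1
  have hr_ge' : (a : ℤ) ^ i ≤ r := by exact_mod_cast hr_ge
  have hr_lt' : (r : ℤ) < a * (a : ℤ) ^ i := by rw [← pow_succ']; exact_mod_cast hr_lt
  have hS : |S| ≤ (a : ℤ) ^ i - 1 :=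
    abs_sum_mul_pow_le (by exact_mod_cast (by omega : 1 ≤ a))
      (fun t ht => Finset.mem_range.mpr (Finset.mem_filter.mp ht).2)
      (fun t ht => hc t (Finset.mem_filter.mp ht).1)
  have hhigh : m ∣ (n : ℤ) - S := by
    rw [hsum, ← Finset.sum_filter_add_sum_filter_not T (· < i), add_sub_cancel_left]
    refine Finset.dvd_sum fun t ht => Dvd.dvd.mul_left (pow_dvd_pow _ ?_) _
    obtain ⟨htT, hti⟩ := Finset.mem_filter.mp ht
    have : t ≠ i := fun h => hT.1 (h ▸ htT)
    have : t ≠ i + 1 := fun h => hT.2 (h ▸ htT)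
    omega
  have hmod : m ∣ (n : ℤ) - r := ⟨(n : ℤ) / m, by
    rw [Int.natCast_mod, Int.emod_def]; push_cast; ring⟩
  have hdiff : (r : ℤ) - S = 0 := by
    refine Int.eq_zero_of_abs_lt_dvd (by simpa using dvd_sub hhigh hmod) ?_
    have hm : m = a * a * (a : ℤ) ^ i := by ring
    have ha' : (2 : ℤ) ≤ a := by exact_mod_cast ha
    rw [abs_of_nonneg (by linarith [le_abs_self S]), hm]
    nlinarith [neg_abs_le S, pow_pos (by omega : (0 : ℤ) < a) i]
  linarith [le_abs_self S]

lemma ncard_le_card_of_forall_mem_or_succ_mem {B : Set ℕ} {T : Finset ℕ}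
    (hB : ∀ i ∈ B, i + 1 ∉ B) (hT : ∀ i ∈ B, i ∈ T ∨ i + 1 ∈ T) :
    B.ncard ≤ T.card := by
  classical
  rw [← Set.ncard_coe_finset]
  refine Set.ncard_le_ncard_of_injOn (fun i => if i ∈ T then i else i + 1) ?_ ?_
  · intro i hi
    split_ifs with h
    exacts [h, (hT i hi).resolve_left h]
  · intro i hi j hj hij
    by_cases hiT : i ∈ T <;> by_cases hjT : j ∈ T <;> simp only [hiT, hjT, if_true, if_false] at hij
    · exact hij
    · exact absurd (hij ▸ hi) (hB j hj)
    · exact absurd (hij ▸ hj) (hB i hi)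
    · omega

theorem stmt_7_general (a k : ℕ) (ha : 2 ≤ a)
    (T : Finset ℕ) (hT : T.card = k)
    (δ : ℕ → ℕ) (hδ : ∀ t ∈ T, 1 ≤ δ t ∧ δ t ≤ a - 1)
    (ε : ℕ → ℤ) (hε : ∀ t ∈ T, ε t = 1 ∨ ε t = -1)
    (n : ℕ)
    (hsum : (n : ℤ) = ∑ t ∈ T, ε t * (δ t : ℤ) * (a : ℤ) ^ t) :
    blockCount a n ≤ k := by
  have hc : ∀ t ∈ T, |ε t * (δ t : ℤ)| ≤ a - 1 := fun t ht => by
    have hδt : (δ t : ℤ) ≤ a - 1 := by have := (hδ t ht).2; omega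
    rcases hε t ht with h | h <;> simpa [h] using hδt
  rw [← hT]
  refine ncard_le_card_of_forall_mem_or_succ_mem (fun i hi hi1 => hi1.1 hi.2) ?_
  exact fun i hi => mem_or_succ_mem_of_digit_ne_zero_of_digit_succ_eq_zero ha hc hsum hi.1 hi.2

theorem stmt_7 (a k : ℕ) (ha : 2 ≤ a) (hk : 1 ≤ k)
    (T : Finset ℕ) (hT : T.card = k)
    (δ : ℕ → ℕ) (hδ : ∀ t ∈ T, 1 ≤ δ t ∧ δ t ≤ a - 1)
    (ε : ℕ → ℤ) (hε : ∀ t ∈ T, ε t = 1 ∨ ε t = -1)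
    (n : ℕ) (hn : 0 < n)
    (hsum : (n : ℤ) = ∑ t ∈ T, ε t * (δ t : ℤ) * (a : ℤ) ^ t) :
    blockCount a n ≤ k :=
  stmt_7_general a k ha T hT δ hδ ε hε n hsum
end

section
/- Let a and b be integers greater than 1 such that a^m ≠ b^n for all positive integers m and n, and let k be a positive integer with a^{k−1} ≤ t < a^k for a positive integer t. Then there exist infinitely many positive integers n for which there exists a positive integer m with t·a^{km} ≤ b^n < (t+1)·a^{km}. -/
/-! With `A = a ^ k`, the condition `t * A ^ m ≤ b ^ n < (t + 1) * A ^ m` says that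
`n * log_A b - m` lies in `[log_A t, log_A (t + 1)) ⊆ [0, 1)`. Since no power of `a` equals a
power of `b`, `log_A b` is irrational, so by Dirichlet's approximation theorem some multiple
`p * log_A b` is within `δ ≠ 0` of an integer with `|δ|` shorter than that interval; the
multiples `j * δ` then step through the interval modulo `1` for arbitrarily large `j`. -/

open Real

theorem exists_nat_mul_sub_int_mem_Ioo_of_pos {δ c d : ℝ} (hδ : 0 < δ) (hδcd : δ < d - c)
    (N : ℕ) : ∃ j : ℕ, N < j ∧ ∃ k : ℤ, j * δ - k ∈ Set.Ioo c d := by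
  set k : ℤ := ⌈N * δ - c⌉
  set y : ℝ := (k + c) / δ
  have hNy : (N : ℝ) ≤ y := by
    rw [le_div_iff₀ hδ]
    linarith [Int.le_ceil (N * δ - c)]
  have hy : 0 ≤ y := (Nat.cast_nonneg N).trans hNy
  refine ⟨⌊y⌋₊ + 1, Nat.lt_succ_of_le (Nat.le_floor hNy), k, ?_, ?_⟩
  · have := (div_lt_iff₀ hδ).1 (Nat.lt_floor_add_one y)
    push_cast
    linarith
  · have := (le_div_iff₀ hδ).1 (Nat.floor_le hy)
    push_cast
    linarith

theorem exists_nat_mul_sub_int_mem_Ioo_of_ne_zero {δ c d : ℝ} (hδ : δ ≠ 0)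
    (hδcd : |δ| < d - c) (N : ℕ) : ∃ j : ℕ, N < j ∧ ∃ k : ℤ, j * δ - k ∈ Set.Ioo c d := by
  rcases hδ.lt_or_gt with hneg | hpos
  · obtain ⟨j, hNj, k, hk⟩ := exists_nat_mul_sub_int_mem_Ioo_of_pos (neg_pos.2 hneg)
      (c := -d) (d := -c) (by rw [abs_of_neg hneg] at hδcd; linarith) N
    refine ⟨j, hNj, -k, ?_, ?_⟩ <;> push_cast <;> linarith [hk.1, hk.2]
  · exact exists_nat_mul_sub_int_mem_Ioo_of_pos hpos (by rwa [abs_of_pos hpos] at hδcd) N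

theorem Irrational.exists_nat_mul_sub_int_mem_Ioo {α c d : ℝ} (hα : Irrational α) (hcd : c < d)
    (N : ℕ) : ∃ n : ℕ, N < n ∧ ∃ m : ℤ, n * α - m ∈ Set.Ioo c d := by
  obtain ⟨K, hK⟩ := exists_nat_one_div_lt (sub_pos.2 hcd)
  obtain ⟨p, hp, -, hδ⟩ := exists_nat_abs_mul_sub_round_le α K.succ_pos
  have hδ0 : p * α - round (p * α) ≠ 0 :=
    sub_ne_zero.2 ((hα.natCast_mul hp.ne').ne_int _)
  have hδcd : |p * α - round (p * α)| < d - c := by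
    refine hδ.trans_lt (lt_of_le_of_lt ?_ hK)
    gcongr
    linarith
  obtain ⟨j, hNj, k, hk⟩ := exists_nat_mul_sub_int_mem_Ioo_of_ne_zero hδ0 hδcd N
  refine ⟨j * p, hNj.trans_le (Nat.le_mul_of_pos_right j hp), j * round (p * α) + k, ?_⟩
  convert hk using 1
  push_cast
  ring

theorem irrational_logb_of_pow_ne_pow {A b : ℕ} (hA : 1 < A) (hb : 1 < b)
    (h : ∀ m n : ℕ, 0 < m → 0 < n → A ^ m ≠ b ^ n) : Irrational (logb A b) := by
  rintro ⟨q, hq⟩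
  have hA' : (1 : ℝ) < A := by exact_mod_cast hA
  have hq0 : 0 < q := by
    have := logb_pos hA' (by exact_mod_cast hb : (1 : ℝ) < b)
    rw [← hq] at this
    exact_mod_cast this
  obtain ⟨p, hp⟩ := Int.eq_ofNat_of_zero_le (Rat.num_nonneg.2 hq0.le)
  have hp0 : 0 < p := by have := Rat.num_pos.2 hq0; omega
  refine h p q.den hp0 q.den_pos ?_
  have hqden : (q : ℝ) * q.den = p := by
    exact_mod_cast (Rat.mul_den_eq_num q).trans (congrArg Int.cast hp)
  have : (b : ℝ) ^ q.den = (A : ℝ) ^ p := by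
    rw [← rpow_logb (by positivity) hA'.ne' (by positivity : (0 : ℝ) < b), ← hq,
      ← rpow_mul_natCast (by positivity), hqden, rpow_natCast]
  exact_mod_cast this.symm

theorem Real.logb_mul_pow_self {A t : ℝ} (hA : 1 < A) (ht : t ≠ 0) (m : ℕ) :
    logb A (t * A ^ m) = logb A t + m := by
  rw [logb_mul ht (by positivity), logb_pow, logb_self_eq_one hA, mul_one]

theorem Real.mul_pow_lt_iff_lt_logb {A t x : ℝ} (hA : 1 < A) (ht : 0 < t) (hx : 0 < x) (m : ℕ) :
    t * A ^ m < x ↔ logb A t + m < logb A x := by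
  rw [← logb_mul_pow_self hA ht.ne', logb_lt_logb_iff hA (by positivity) hx]

theorem Real.lt_mul_pow_iff_logb_lt {A t x : ℝ} (hA : 1 < A) (ht : 0 < t) (hx : 0 < x) (m : ℕ) :
    x < t * A ^ m ↔ logb A x < logb A t + m := by
  rw [← logb_mul_pow_self hA ht.ne', logb_lt_logb_iff hA hx (by positivity)]

theorem stmt_9_general (a b t k : ℕ) (ha : 1 < a) (hb : 1 < b)
    (h : ∀ m n : ℕ, 0 < m → 0 < n → a ^ m ≠ b ^ n)
    (ht : 0 < t) (hk : 0 < k) (htub : t < a ^ k) :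
    {n : ℕ | 0 < n ∧ ∃ m : ℕ, 0 < m ∧
      t * a ^ (k * m) ≤ b ^ n ∧ b ^ n < (t + 1) * a ^ (k * m)}.Infinite := by
  set A := a ^ k
  have hA : (1 : ℝ) < A := by exact_mod_cast Nat.one_lt_pow hk.ne' ha
  have hα : Irrational (logb A b) := irrational_logb_of_pow_ne_pow (Nat.one_lt_pow hk.ne' ha) hb
    fun m n hm hn => by rw [← pow_mul]; exact h _ n (by positivity) hn
  have hαpos : 0 < logb A b := logb_pos hA (by exact_mod_cast hb)
  have ht' : (0 : ℝ) < t := by exact_mod_cast ht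
  have hd : logb A (t + 1) ≤ 1 := by
    refine ((logb_le_logb hA (by positivity) (by positivity)).2 ?_).trans_eq (logb_self_eq_one hA)
    exact_mod_cast htub
  refine Set.infinite_of_forall_exists_gt fun N => ?_
  obtain ⟨n, hn, m, hlo, hhi⟩ := hα.exists_nat_mul_sub_int_mem_Ioo
    (logb_lt_logb hA ht' (lt_add_one _)) (max N ⌈(logb A b)⁻¹⌉₊)
  have hnα : 1 < n * logb A b := by
    rw [← inv_mul_cancel₀ hαpos.ne']
    exact mul_lt_mul_of_pos_right ((Nat.le_ceil _).trans_lt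
      (by exact_mod_cast (le_max_right _ _).trans_lt hn)) hαpos
  have hm : 0 < m := by
    have := logb_nonneg hA (by exact_mod_cast ht : (1 : ℝ) ≤ t)
    have : (0 : ℝ) < m := by linarith
    exact_mod_cast this
  lift m to ℕ using hm.le
  push_cast at hlo hhi
  have hlo' : (t : ℝ) * A ^ m < b ^ n :=
    (mul_pow_lt_iff_lt_logb hA ht' (by positivity) m).2 (by rw [logb_pow]; linarith)
  have hhi' : (b : ℝ) ^ n < (t + 1) * A ^ m :=
    (lt_mul_pow_iff_logb_lt hA (by positivity) (by positivity) m).2 (by rw [logb_pow]; linarith)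
  refine ⟨n, ⟨by omega, m, by omega, ?_, ?_⟩, (le_max_left _ _).trans_lt hn⟩ <;> rw [pow_mul]
  · exact_mod_cast hlo'.le
  · exact_mod_cast hhi'

theorem stmt_9 (a b t k : ℕ) (ha : 1 < a) (hb : 1 < b)
    (h : ∀ m n : ℕ, 0 < m → 0 < n → a ^ m ≠ b ^ n)
    (ht : 0 < t) (hk : 0 < k) (htlb : a ^ (k - 1) ≤ t) (htub : t < a ^ k) :
    {n : ℕ | 0 < n ∧ ∃ m : ℕ, 0 < m ∧
      t * a ^ (k * m) ≤ b ^ n ∧ b ^ n < (t + 1) * a ^ (k * m)}.Infinite :=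
  stmt_9_general a b t k ha hb h ht hk htub
end

section
/- Let a and b be integers greater than 1, and consider the additive group ℤ with generating sets A = {a^i : i ≥ 0} and B = {b^j : j ≥ 0}, with associated metrics d_A and d_B. If there exist positive integers m and n such that a^m = b^n, then the metrics d_A and d_B are bi-Lipschitz equivalent. -/
/-- The word length of the integer `x` with respect to the generating set
`{a^i : i ≥ 0}` of the additive group ℤ: the least `k` such that `x` is a sum of
`k` terms, each of the form `a^i` or `-a^i` with `i` a nonnegative integer. -/
noncomputable def geomLength (a : ℤ) (x : ℤ) : ℕ :=
  sInf {n : ℕ | ∃ l : List ℤ, l.length = n ∧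
    (∀ z ∈ l, ∃ i : ℕ, z = a ^ i ∨ z = -a ^ i) ∧ l.sum = x}

/-- The (real-valued) metric on ℤ associated to the generating set `{a^i : i ≥ 0}`:
`d_A(x,y) = ℓ_A(x - y)`. -/
noncomputable def geomDist (a : ℤ) (x y : ℤ) : ℝ :=
  (geomLength a (x - y) : ℝ)

lemma geomLength_le (a x : ℤ) (l : List ℤ)
    (h1 : ∀ z ∈ l, ∃ i : ℕ, z = a ^ i ∨ z = -a ^ i) (h2 : l.sum = x) :
    geomLength a x ≤ l.length :=
  Nat.sInf_le ⟨l, rfl, h1, h2⟩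

lemma geomLength_spec (a x : ℤ) :
    ∃ l : List ℤ, l.length = geomLength a x ∧
      (∀ z ∈ l, ∃ i : ℕ, z = a ^ i ∨ z = -a ^ i) ∧ l.sum = x := by
  have hne : {n : ℕ | ∃ l : List ℤ, l.length = n ∧
      (∀ z ∈ l, ∃ i : ℕ, z = a ^ i ∨ z = -a ^ i) ∧ l.sum = x}.Nonempty := by
    refine ⟨x.natAbs, List.replicate x.natAbs (if 0 ≤ x then 1 else -1), by simp, ?_, ?_⟩
    · intro z hz
      rw [List.mem_replicate] at hz
      exact ⟨0, by rw [hz.2]; split_ifs <;> simp⟩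
    · rw [List.sum_replicate]
      split_ifs with hx
      · simp [Int.natAbs_of_nonneg hx]
      · simp only [nsmul_eq_mul, mul_neg_one]
        omega
  exact Nat.sInf_mem hne

lemma geomLength_zero (a : ℤ) : geomLength a 0 = 0 :=
  Nat.le_zero.mp (geomLength_le a 0 [] (by simp) rfl)

lemma geomLength_add_le (a x y : ℤ) :
    geomLength a (x + y) ≤ geomLength a x + geomLength a y := by
  obtain ⟨lx, hlx, hx1, hx2⟩ := geomLength_spec a x
  obtain ⟨ly, hly, hy1, hy2⟩ := geomLength_spec a y
  have := geomLength_le a (x + y) (lx ++ ly) ?_ (by simp [hx2, hy2])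
  · simpa [hlx, hly] using this
  · intro z hz
    rcases List.mem_append.mp hz with h | h
    exacts [hx1 z h, hy1 z h]

lemma geomLength_neg_le (a x : ℤ) : geomLength a (-x) ≤ geomLength a x := by
  obtain ⟨l, hl, h1, h2⟩ := geomLength_spec a x
  have := geomLength_le a (-x) (l.map (fun z => -z)) ?_ ?_
  · simpa [hl] using this
  · intro z hz
    rw [List.mem_map] at hz
    obtain ⟨w, hw, rfl⟩ := hz
    obtain ⟨i, hi | hi⟩ := h1 w hw
    · exact ⟨i, Or.inr (by rw [hi])⟩
    · exact ⟨i, Or.inl (by rw [hi]; ring)⟩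
  · rw [← h2]
    have : ∀ l : List ℤ, (l.map (fun z => -z)).sum = -l.sum := by
      intro l
      induction l with
      | nil => simp
      | cons c t ih => simp [ih, add_comm]
    exact this l

/-- If `a^m = b^n` with `m > 0`, then every power of `a` has `b`-length at most
`a^(m-1)`. -/
lemma pow_bound (a b : ℤ) (ha : 1 < a) (m n : ℕ) (hm : 0 < m) (hab : a ^ m = b ^ n)
    (i : ℕ) : geomLength b (a ^ i) ≤ (a ^ (m - 1)).toNat := by
  set q := i / m
  set r := i % m
  have hr : r ≤ m - 1 := by
    have := Nat.mod_lt i hm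
    omega
  have ha0 : (0:ℤ) ≤ a := by omega
  have hpow : (0:ℤ) ≤ a ^ r := pow_nonneg ha0 r
  have hle : a ^ r ≤ a ^ (m - 1) := pow_le_pow_right₀ (by omega) hr
  have key : a ^ i = (a ^ r).toNat • b ^ (n * q) := by
    rw [nsmul_eq_mul, Int.toNat_of_nonneg hpow, pow_mul, ← hab, ← pow_mul, ← pow_add]
    congr 1
    have : m * q + r = i := Nat.div_add_mod i m
    omega
  have := geomLength_le b (a ^ i) (List.replicate (a ^ r).toNat (b ^ (n * q))) ?_ ?_
  · refine this.trans ?_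
    simpa using Int.toNat_le_toNat hle
  · intro z hz
    rw [List.mem_replicate] at hz
    exact ⟨n * q, Or.inl hz.2⟩
  · rw [List.sum_replicate, ← key]

lemma length_bound (a b : ℤ) (ha : 1 < a) (m n : ℕ) (hm : 0 < m)
    (hab : a ^ m = b ^ n) (x : ℤ) :
    geomLength b x ≤ (a ^ (m - 1)).toNat * geomLength a x := by
  obtain ⟨l, hl, h1, h2⟩ := geomLength_spec a x
  rw [← hl, ← h2]
  clear hl h2
  induction l with
  | nil => simp [geomLength_zero]
  | cons c t ih =>
    have hc : geomLength b c ≤ (a ^ (m - 1)).toNat := by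
      obtain ⟨i, hi | hi⟩ := h1 c (by simp)
      · rw [hi]; exact pow_bound a b ha m n hm hab i
      · rw [hi]
        exact (geomLength_neg_le b _).trans (pow_bound a b ha m n hm hab i)
    have ht := ih (fun z hz => h1 z (List.mem_cons_of_mem c hz))
    calc geomLength b (c :: t).sum = geomLength b (c + t.sum) := by rw [List.sum_cons]
      _ ≤ geomLength b c + geomLength b t.sum := geomLength_add_le b c t.sum
      _ ≤ (a ^ (m - 1)).toNat + (a ^ (m - 1)).toNat * t.length := add_le_add hc ht
      _ = (a ^ (m - 1)).toNat * (c :: t).length := by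
          rw [List.length_cons]; ring

theorem stmt_12 (a b : ℤ) (ha : 1 < a) (hb : 1 < b)
    (h : ∃ m n : ℕ, 0 < m ∧ 0 < n ∧ a ^ m = b ^ n) :
    ∃ K : ℝ, 1 ≤ K ∧ ∀ x y : ℤ,
      (1 / K) * geomDist a x y ≤ geomDist b x y ∧
      geomDist b x y ≤ K * geomDist a x y := by
  obtain ⟨m, n, hm, hn, hab⟩ := h
  set C1 : ℕ := (a ^ (m - 1)).toNat
  set C2 : ℕ := (b ^ (n - 1)).toNat
  have hC1 : 1 ≤ C1 := by
    have : (0:ℤ) < a ^ (m - 1) := pow_pos (by omega) _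
    omega
  have hC2 : 1 ≤ C2 := by
    have : (0:ℤ) < b ^ (n - 1) := pow_pos (by omega) _
    omega
  refine ⟨max C1 C2, ?_, ?_⟩
  · have h1 : (1:ℝ) ≤ (C1:ℝ) := by exact_mod_cast hC1
    exact h1.trans (le_max_left _ _)
  · have hKpos : (0:ℝ) < max (C1:ℝ) (C2:ℝ) := by
      have h1 : (1:ℝ) ≤ (C1:ℝ) := by exact_mod_cast hC1
      linarith [le_max_left (C1:ℝ) (C2:ℝ)]
    intro x y
    have hB : geomLength b (x - y) ≤ C1 * geomLength a (x - y) :=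
      length_bound a b ha m n hm hab (x - y)
    have hA : geomLength a (x - y) ≤ C2 * geomLength b (x - y) :=
      length_bound b a hb n m hn hab.symm (x - y)
    constructor
    · rw [div_mul_eq_mul_div, one_mul, div_le_iff₀ hKpos]
      unfold geomDist
      calc (geomLength a (x - y) : ℝ) ≤ (C2 : ℝ) * geomLength b (x - y) := by
            exact_mod_cast hA
        _ ≤ geomLength b (x - y) * max (C1:ℝ) (C2:ℝ) := by
            rw [mul_comm]
            exact mul_le_mul_of_nonneg_left (le_max_right _ _) (by positivity)
    · unfold geomDist
      calc (geomLength b (x - y) : ℝ) ≤ (C1 : ℝ) * geomLength a (x - y) := by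
            exact_mod_cast hB
        _ ≤ max (C1:ℝ) (C2:ℝ) * geomLength a (x - y) :=
            mul_le_mul_of_nonneg_right (le_max_left _ _) (by positivity)
end

section
/- Let a and b be integers greater than 1, and consider the additive group ℤ with generating sets A = {a^i : i ≥ 0} and B = {b^j : j ≥ 0}, with associated metrics d_A and d_B. If the metrics d_A and d_B are bi-Lipschitz equivalent, then there exist positive integers m and n such that a^m = b^n. -/
/-!
Bi-Lipschitz equivalence makes every power `b ^ j` a sum of at most `k` signed powers of `a`.
For a prime `p ∣ a` minimising `v_p(b) / v_p(a)` we can write `b ^ α = a ^ β * c` with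
`p ∤ c`; cancelling powers of `a` does not increase the number of terms, so every `c ^ j` is
again a sum of `k` signed powers of `a`. Modulo `p ^ T` such sums take at most `(2T + 1) ^ k`
values, while by lifting the exponent the order of `c` modulo `p ^ T` is at least `p ^ (T - E)`
for a constant `E` unless `c = 1`. Hence `c = 1` and `b ^ α = a ^ β`.
-/

open Pointwise

def IsSignedPow (a z : ℤ) : Prop := ∃ i : ℕ, z = a ^ i ∨ z = -a ^ i

def IsSignedPowSum (a : ℤ) (k : ℕ) (x : ℤ) : Prop :=
  ∃ l : List ℤ, l.length ≤ k ∧ (∀ z ∈ l, IsSignedPow a z) ∧ l.sum = x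

theorem exists_signedPow_list_sum_eq (a t : ℤ) :
    ∃ l : List ℤ, l.length = t.natAbs ∧ (∀ z ∈ l, IsSignedPow a z) ∧ l.sum = t := by
  refine ⟨List.replicate t.natAbs (if 0 ≤ t then 1 else -1), by simp, ?_, ?_⟩
  · intro z hz
    refine ⟨0, ?_⟩
    rw [(List.mem_replicate.1 hz).2, pow_zero]
    split <;> simp
  · rw [List.sum_replicate, nsmul_eq_mul]
    split <;> omega

/-- Collect the terms `±1` into `u` and factor `a` out of the others. -/
theorem exists_signedPow_list_sum_eq_add_mul (a : ℤ) {l : List ℤ}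
    (hl : ∀ z ∈ l, IsSignedPow a z) :
    ∃ (u : ℤ) (l' : List ℤ), (∀ z ∈ l', IsSignedPow a z) ∧
      u.natAbs + l'.length ≤ l.length ∧ l.sum = u + a * l'.sum := by
  induction l with
  | nil => exact ⟨0, [], by simp, by simp, by simp⟩
  | cons z t ih =>
    obtain ⟨u, l', hl', hlen, hsum⟩ := ih fun w hw => hl w (List.mem_cons_of_mem _ hw)
    obtain ⟨i, hz⟩ := hl z List.mem_cons_self
    cases i with
    | zero =>
      refine ⟨z + u, l', hl', ?_, by simp only [List.sum_cons, hsum]; ring⟩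
      have hz1 : z.natAbs = 1 := by rcases hz with rfl | rfl <;> simp
      have := Int.natAbs_add_le z u
      simp only [List.length_cons]
      omega
    | succ i =>
      obtain ⟨w, hw, rfl⟩ : ∃ w, IsSignedPow a w ∧ z = a * w := by
        rcases hz with rfl | rfl
        · exact ⟨a ^ i, ⟨i, Or.inl rfl⟩, by ring⟩
        · exact ⟨-a ^ i, ⟨i, Or.inr rfl⟩, by ring⟩
      refine ⟨u, w :: l', ?_, by simp only [List.length_cons]; omega, ?_⟩
      · simpa only [List.forall_mem_cons] using ⟨hw, hl'⟩
      · simp only [List.sum_cons, hsum]; ring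

namespace IsSignedPowSum

variable {a : ℤ} {k : ℕ}

theorem of_mul (ha : a ≠ 0) {y : ℤ} (h : IsSignedPowSum a k (a * y)) :
    IsSignedPowSum a k y := by
  obtain ⟨l, hlen, hl, hsum⟩ := h
  obtain ⟨u, l', hl', hlen', hsum'⟩ := exists_signedPow_list_sum_eq_add_mul a hl
  obtain ⟨v, rfl⟩ : a ∣ u := ⟨y - l'.sum, by linear_combination hsum'.symm.trans hsum⟩
  obtain ⟨lv, hlv, hlv', hsumv⟩ := exists_signedPow_list_sum_eq a v
  have hv : v.natAbs ≤ (a * v).natAbs := by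
    rw [Int.natAbs_mul]
    exact Nat.le_mul_of_pos_left _ (Int.natAbs_pos.mpr ha)
  refine ⟨lv ++ l', ?_, ?_, ?_⟩
  · rw [List.length_append]; omega
  · simpa only [List.forall_mem_append] using ⟨hlv', hl'⟩
  · rw [List.sum_append, hsumv]
    exact mul_left_cancel₀ ha (by linear_combination hsum'.symm.trans hsum)

theorem of_pow_mul (ha : a ≠ 0) {e : ℕ} {y : ℤ} (h : IsSignedPowSum a k (a ^ e * y)) :
    IsSignedPowSum a k y := by
  induction e with
  | zero => simpa using h
  | succ e ih => exact ih (of_mul ha (by rwa [pow_succ', mul_assoc] at h))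

end IsSignedPowSum

theorem Finset.list_sum_mem_nsmul {α : Type*} [AddMonoid α] [DecidableEq α] {s : Finset α}
    (hs : 0 ∈ s) {l : List α} (hl : ∀ x ∈ l, x ∈ s) {n : ℕ} (hn : l.length ≤ n) :
    l.sum ∈ n • s := by
  induction l generalizing n with
  | nil => simpa using Finset.zero_mem_nsmul hs
  | cons x t ih =>
    obtain ⟨n, rfl⟩ : ∃ m, n = m + 1 := Nat.exists_eq_add_one.mpr (by simp at hn; omega)
    rw [List.sum_cons, succ_nsmul']
    exact Finset.add_mem_add (hl x List.mem_cons_self)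
      (ih (fun y hy => hl y (List.mem_cons_of_mem x hy)) (by simpa using hn))

theorem exists_pow_eq_one_of_forall_pow_mem {M : Type*} [Monoid M] {x : M}
    (hx : IsUnit x) {s : Finset M} (hs : ∀ j, x ^ j ∈ s) :
    ∃ d, 0 < d ∧ d ≤ s.card ∧ x ^ d = 1 := by
  have key : ∀ u v, u < v → x ^ u = x ^ v → x ^ (v - u) = 1 := fun u v huv heq =>
    (hx.pow u).mul_left_cancel <| by
      rw [← pow_add, Nat.add_sub_cancel' huv.le, mul_one]; exact heq.symm
  obtain ⟨u, hu, v, hv, hne, heq⟩ := Finset.exists_ne_map_eq_of_card_lt_of_maps_to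
    (s := Finset.range (s.card + 1)) (t := s) (by simp) fun j _ => hs j
  simp only [Finset.mem_range] at hu hv
  rcases hne.lt_or_gt with h | h
  · exact ⟨v - u, by omega, by omega, key u v h heq⟩
  · exact ⟨u - v, by omega, by omega, key v u h heq.symm⟩

theorem exists_finset_card_le_forall_isSignedPowSum_mem {R : Type*} [Ring R] [DecidableEq R]
    {a : ℤ} {T : ℕ} (haT : (a : R) ^ T = 0) (k : ℕ) :
    ∃ s : Finset R, s.card ≤ (2 * T + 1) ^ k ∧
      ∀ x, IsSignedPowSum a k x → (x : R) ∈ s := by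
  set O : Finset R := insert 0 ((Finset.range T).image (fun i => (a : R) ^ i) ∪
    (Finset.range T).image (fun i => -(a : R) ^ i))
  have hO : O.card ≤ 2 * T + 1 := by
    refine (Finset.card_insert_le _ _).trans ?_
    have := (Finset.card_union_le _ _).trans (add_le_add
      (Finset.card_image_le (s := Finset.range T) (f := fun i => (a : R) ^ i))
      (Finset.card_image_le (s := Finset.range T) (f := fun i => -(a : R) ^ i)))
    simp only [Finset.card_range] at this
    omega
  have hmem : ∀ z, IsSignedPow a z → (z : R) ∈ O := by
    rintro z ⟨i, rfl | rfl⟩ <;> push_cast <;> rcases lt_or_ge i T with hi | hi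
    · exact Finset.mem_insert_of_mem <| Finset.mem_union_left _ <|
        Finset.mem_image_of_mem _ (Finset.mem_range.2 hi)
    · simp [O, pow_eq_zero_of_le hi haT]
    · exact Finset.mem_insert_of_mem <| Finset.mem_union_right _ <|
        Finset.mem_image_of_mem _ (Finset.mem_range.2 hi)
    · simp [O, pow_eq_zero_of_le hi haT]
  refine ⟨k • O, Finset.card_nsmul_le.trans (Nat.pow_le_pow_left hO k), ?_⟩
  rintro x ⟨l, hlen, hl, rfl⟩
  rw [Int.cast_list_sum]
  exact Finset.list_sum_mem_nsmul (Finset.mem_insert_self 0 _)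
    (fun y hy => by obtain ⟨z, hz, rfl⟩ := List.mem_map.1 hy; exact hmem z (hl z hz))
    (by rwa [List.length_map])

theorem padicValNat_pow_sub_one_le_pow_pow_sub_one (p : ℕ) [Fact p.Prime] {c : ℕ} (hc : 1 < c)
    (d : ℕ) {m : ℕ} (hm : m ≠ 0) :
    padicValNat p (c ^ d - 1) ≤ padicValNat p ((c ^ m) ^ d - 1) := by
  have hlt : 1 < (c ^ m) ^ d ∨ d = 0 := by
    rcases Nat.eq_zero_or_pos d with rfl | hd
    · exact Or.inr rfl
    · exact Or.inl (Nat.one_lt_pow hd.ne' (Nat.one_lt_pow hm hc))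
  rcases hlt with hlt | rfl
  · refine (padicValNat_dvd_iff_le (by omega)).mp (pow_padicValNat_dvd.trans ?_)
    simpa [← pow_mul, mul_comm] using Nat.sub_dvd_pow_sub_pow (c ^ d) 1 m
  · simp

theorem exists_padicValNat_pow_sub_one_le {p c : ℕ} (hp : p.Prime) (hc : 1 < c)
    (hpc : ¬ p ∣ c) :
    ∃ E, ∀ d, d ≠ 0 → padicValNat p (c ^ d - 1) ≤ E + padicValNat p d := by
  have : Fact p.Prime := ⟨hp⟩
  rcases hp.eq_two_or_odd' with rfl | hodd
  · refine ⟨padicValNat 2 (c + 1) + padicValNat 2 (c - 1), fun d hd => ?_⟩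
    have hmono := padicValNat_pow_sub_one_le_pow_pow_sub_one 2 hc d (m := 2) two_ne_zero
    have lte := padicValNat.pow_two_sub_one hc hpc (n := 2 * d) (by omega) (even_two_mul d)
    rw [padicValNat.mul two_ne_zero hd, padicValNat.self one_lt_two] at lte
    rw [← pow_mul] at hmono
    omega
  · have hp1 : 1 < p - 1 := by have := hp.two_le; have := hodd.pos; grind
    have hcp : 1 < c ^ (p - 1) := Nat.one_lt_pow (by omega) hc
    have hferm : p ∣ c ^ (p - 1) - 1 := by
      rw [← ZMod.natCast_eq_zero_iff, Nat.cast_sub hcp.le, Nat.cast_pow, Nat.cast_one,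
        ZMod.pow_card_sub_one_eq_one ((ZMod.natCast_eq_zero_iff c p).not.mpr hpc), sub_self]
    refine ⟨padicValNat p (c ^ (p - 1) - 1), fun d hd => ?_⟩
    have hmono := padicValNat_pow_sub_one_le_pow_pow_sub_one p hc d (m := p - 1) (by omega)
    have lte := padicValNat.pow_sub_pow hodd hcp (by simpa using hferm)
      (fun h => hpc (hp.dvd_of_dvd_pow h)) hd
    rw [one_pow] at lte
    omega

theorem exists_two_pow_mul_lt_two_pow (E k : ℕ) : ∃ T, 2 ^ E * (2 * T + 1) ^ k < 2 ^ T := by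
  set S := k + (k * k + k + E) with hS_def
  have hS : E + (S + 2) * k < 2 ^ S := calc
    E + (S + 2) * k < (k + 1) * (k * k + k + E + 1) := by rw [hS_def]; ring_nf; omega
    _ ≤ 2 ^ k * 2 ^ (k * k + k + E) := Nat.mul_le_mul Nat.lt_two_pow_self Nat.lt_two_pow_self
    _ = 2 ^ S := (pow_add _ _ _).symm
  refine ⟨2 ^ S, ?_⟩
  calc 2 ^ E * (2 * 2 ^ S + 1) ^ k ≤ 2 ^ E * (2 ^ (S + 2)) ^ k := by
        gcongr; rw [pow_succ, pow_succ]; have := Nat.one_le_two_pow (n := S); omega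
    _ = 2 ^ (E + (S + 2) * k) := by rw [← pow_mul, ← pow_add]
    _ < 2 ^ 2 ^ S := Nat.pow_lt_pow_right one_lt_two hS

theorem not_forall_isSignedPowSum_pow {a : ℤ} {c p : ℕ} (k : ℕ) (hp : p.Prime)
    (hpa : (p : ℤ) ∣ a) (hc : 1 < c) (hpc : ¬ p ∣ c) :
    ¬ ∀ j, IsSignedPowSum a k ((c : ℤ) ^ j) := by
  intro H
  have : Fact p.Prime := ⟨hp⟩
  obtain ⟨E, hE⟩ := exists_padicValNat_pow_sub_one_le hp hc hpc
  obtain ⟨T, hT⟩ := exists_two_pow_mul_lt_two_pow E k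
  have haT : (a : ZMod (p ^ T)) ^ T = 0 := by
    rw [← Int.cast_pow, ZMod.intCast_zmod_eq_zero_iff_dvd, Nat.cast_pow]
    exact pow_dvd_pow_of_dvd hpa T
  obtain ⟨s, hs, hmem⟩ := exists_finset_card_le_forall_isSignedPowSum_mem haT k
  have hunit : IsUnit (c : ZMod (p ^ T)) :=
    (ZMod.isUnit_iff_coprime _ _).mpr
      ((Nat.coprime_comm.mp (hp.coprime_iff_not_dvd.mpr hpc)).pow_right T)
  obtain ⟨d, hd, hds, hcd⟩ := exists_pow_eq_one_of_forall_pow_mem hunit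
    fun j => by simpa using hmem _ (H j)
  have hcd1 : 1 < c ^ d := Nat.one_lt_pow hd.ne' hc
  have hdvd : p ^ T ∣ c ^ d - 1 := by
    rw [← ZMod.natCast_eq_zero_iff, Nat.cast_sub hcd1.le, Nat.cast_pow, hcd, Nat.cast_one,
      sub_self]
  have hval : T ≤ E + padicValNat p d :=
    ((padicValNat_dvd_iff_le (by omega)).mp hdvd).trans (hE d hd.ne')
  have hpd : p ^ padicValNat p d ≤ d := Nat.le_of_dvd hd pow_padicValNat_dvd
  have : 2 ^ T ≤ 2 ^ E * (2 * T + 1) ^ k := calc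
    2 ^ T ≤ 2 ^ (E + padicValNat p d) := Nat.pow_le_pow_right two_pos hval
    _ ≤ 2 ^ E * p ^ padicValNat p d := by
        rw [pow_add]; gcongr; exact hp.two_le
    _ ≤ 2 ^ E * (2 * T + 1) ^ k := Nat.mul_le_mul_left _ (hpd.trans (hds.trans hs))
  omega

theorem exists_pow_eq_pow_mul_not_dvd {A B : ℕ} (hA : 1 < A) (hB : B ≠ 0) :
    ∃ p, p.Prime ∧ p ∣ A ∧ ∃ α β C, 0 < α ∧ B ^ α = A ^ β * C ∧ ¬ p ∣ C := by
  have hA0 : A ≠ 0 := by omega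
  obtain ⟨p, hpA, hmin⟩ := A.primeFactors.exists_min_image
    (fun q => (B.factorization q : ℚ) / A.factorization q)
    (Nat.nonempty_primeFactors.mpr hA)
  have hp := Nat.prime_of_mem_primeFactors hpA
  set α := A.factorization p
  set β := B.factorization p
  have hα : 0 < α := hp.factorization_pos_of_dvd hA0 (Nat.dvd_of_mem_primeFactors hpA)
  have hdvd : A ^ β ∣ B ^ α := by
    rw [← Nat.factorization_le_iff_dvd (pow_ne_zero β hA0) (pow_ne_zero α hB)]
    intro q
    simp only [Nat.factorization_pow, Finsupp.coe_smul, Pi.smul_apply, smul_eq_mul]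
    by_cases hq : q ∈ A.primeFactors
    · have hq0 : (0 : ℚ) < A.factorization q := by
        exact_mod_cast (Nat.prime_of_mem_primeFactors hq).factorization_pos_of_dvd hA0
          (Nat.dvd_of_mem_primeFactors hq)
      have := hmin q hq
      rw [div_le_div_iff₀ (by exact_mod_cast hα) hq0] at this
      exact_mod_cast (by linarith : (β : ℚ) * A.factorization q ≤ α * B.factorization q)
    · rw [← Nat.support_factorization, Finsupp.notMem_support_iff] at hq
      simp [hq]
  obtain ⟨C, hC⟩ := hdvd
  have hC0 : C ≠ 0 := by rintro rfl; simp_all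
  refine ⟨p, hp, Nat.dvd_of_mem_primeFactors hpA, α, β, C, hα, hC, fun hpC => ?_⟩
  have hfac : α * β = β * α + C.factorization p := by
    simpa only [Nat.factorization_mul (pow_ne_zero β hA0) hC0, Nat.factorization_pow,
      Finsupp.add_apply, Finsupp.smul_apply, smul_eq_mul] using congrArg (·.factorization p) hC
  have := hp.factorization_pos_of_dvd hC0 hpC
  rw [mul_comm β α] at hfac
  omega

theorem exists_pow_eq_pow_of_forall_isSignedPowSum {A B k : ℕ} (hA : 1 < A) (hB : 1 < B)
    (H : ∀ j, IsSignedPowSum A k ((B : ℤ) ^ j)) :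
    ∃ m n, 0 < m ∧ 0 < n ∧ A ^ m = B ^ n := by
  obtain ⟨p, hp, hpA, α, β, C, hα, hBC, hpC⟩ :=
    exists_pow_eq_pow_mul_not_dvd hA (by omega : B ≠ 0)
  have hC0 : C ≠ 0 := by rintro rfl; simp at hBC; omega
  rcases (show C = 1 ∨ 1 < C by omega) with rfl | hC
  · refine ⟨β, α, Nat.pos_of_ne_zero fun hβ => ?_, hα, by simpa using hBC.symm⟩
    simp [hβ] at hBC
    omega
  · refine absurd (fun j => ?_) <|
      not_forall_isSignedPowSum_pow k hp (Int.natCast_dvd_natCast.mpr hpA) hC hpC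
    apply IsSignedPowSum.of_pow_mul (e := β * j) (by omega)
    have hBj : B ^ (α * j) = A ^ (β * j) * C ^ j := by rw [pow_mul, hBC, mul_pow, pow_mul]
    have := H (α * j)
    rwa [← Nat.cast_pow, hBj, Nat.cast_mul, Nat.cast_pow, Nat.cast_pow] at this

theorem isSignedPowSum_of_geomLength_le {a x : ℤ} {k : ℕ} (h : geomLength a x ≤ k) :
    IsSignedPowSum a k x := by
  obtain ⟨l, hl, hla, hsum⟩ := exists_signedPow_list_sum_eq a x
  obtain ⟨l, hlen, hla, hsum⟩ : geomLength a x ∈ _ := Nat.sInf_mem ⟨_, l, hl, hla, hsum⟩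
  exact ⟨l, hlen ▸ h, hla, hsum⟩

theorem geomLength_pow_le_one (a : ℤ) (j : ℕ) : geomLength a (a ^ j) ≤ 1 :=
  Nat.sInf_le ⟨[a ^ j], rfl, by simpa using ⟨j, Or.inl rfl⟩, by simp⟩

theorem geomLength_pow_le_floor {a b : ℤ} {K : ℝ} (hK : 0 < K)
    (h : ∀ x y, 1 / K * geomDist a x y ≤ geomDist b x y) (j : ℕ) :
    geomLength a (b ^ j) ≤ ⌊K⌋₊ := by
  have hb : geomDist b (b ^ j) 0 ≤ 1 := by
    simpa [geomDist] using geomLength_pow_le_one b j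
  have := (h (b ^ j) 0).trans hb
  rw [geomDist, sub_zero, div_mul_eq_mul_div, one_mul, div_le_one hK] at this
  exact Nat.le_floor this

theorem stmt_13 (a b : ℤ) (ha : 1 < a) (hb : 1 < b)
    (hLip : ∃ K : ℝ, 1 ≤ K ∧ ∀ x y : ℤ,
      (1 / K) * geomDist a x y ≤ geomDist b x y ∧
      geomDist b x y ≤ K * geomDist a x y) :
    ∃ m n : ℕ, 0 < m ∧ 0 < n ∧ a ^ m = b ^ n := by
  obtain ⟨K, hK, hLip⟩ := hLip
  lift a to ℕ using by omega
  lift b to ℕ using by omega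
  obtain ⟨m, n, hm, hn, h⟩ := exists_pow_eq_pow_of_forall_isSignedPowSum (k := ⌊K⌋₊)
    (by omega) (by omega) fun j => isSignedPowSum_of_geomLength_le <|
      geomLength_pow_le_floor (by linarith) (fun x y => (hLip x y).1) j
  exact ⟨m, n, hm, hn, by exact_mod_cast h⟩
end
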